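/- Let A be a complex unital Banach algebra and let α: [a,c] → A be continuous, with a ≤ b ≤ c. Denote by Te^{∫_p^q α} := 1 + Σ_{m≥1} ∫_{p≤s₁≤⋯≤s_m≤q} α(s₁)⋯α(s_m) ds₁⋯ds_m the time-ordered exponential over [p,q]. Then the time-ordered exponential is multiplicative under concatenation of intervals: Te^{∫_a^c α} = Te^{∫_a^b α} · Te^{∫_b^c α}. -/

import Mathlib

/-!
Statement 15: the time-ordered exponential in a complex unital Banach algebra is
multiplicative under concatenation of intervals:
`Te^{∫_a^c α} = Te^{∫_a^b α} · Te^{∫_b^c α}`.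
-/

open MeasureTheory ENNReal

noncomputable section
set_option linter.unusedSectionVars false
set_option linter.unnecessarySimpa false
set_option maxHeartbeats 1000000

/-- The ordered simplex `{p ≤ s₁ ≤ s₂ ≤ ⋯ ≤ s_m ≤ q}`. -/
def orderedSimplex (m : ℕ) (p q : ℝ) : Set (Fin m → ℝ) :=
  {s | (∀ i j : Fin m, i ≤ j → s i ≤ s j) ∧ ∀ i, s i ∈ Set.Icc p q}

/-- The `m`-th term `∫_{p ≤ s₁ ≤ ⋯ ≤ s_m ≤ q} α(s₁) α(s₂) ⋯ α(s_m) ds₁⋯ds_m` of the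
Dyson series, with the factors multiplied in time order. -/
def dysonTerm {A : Type} [NormedRing A] [NormedAlgebra ℂ A] [CompleteSpace A]
    (α : ℝ → A) (m : ℕ) (p q : ℝ) : A :=
  ∫ s in orderedSimplex m p q, (List.ofFn fun i => α (s i)).prod

/-- The time-ordered exponential
`Te^{∫_p^q α(s)ds} = 1 + Σ_{m≥1} ∫_{p≤s₁≤⋯≤s_m≤q} α(s₁)⋯α(s_m) ds₁⋯ds_m`. -/
def dysonExp {A : Type} [NormedRing A] [NormedAlgebra ℂ A] [CompleteSpace A]
    (α : ℝ → A) (p q : ℝ) : A :=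
  1 + ∑' m : ℕ, dysonTerm α (m + 1) p q

lemma orderedSimplex_isClosed (m : ℕ) (p q : ℝ) : IsClosed (orderedSimplex m p q) := by
  have h1 : IsClosed {s : Fin m → ℝ | ∀ i j : Fin m, i ≤ j → s i ≤ s j} := by
    have : {s : Fin m → ℝ | ∀ i j : Fin m, i ≤ j → s i ≤ s j}
        = ⋂ (i : Fin m) (j : Fin m) (_ : i ≤ j), {s : Fin m → ℝ | s i ≤ s j} := by
      ext s; simp [Set.mem_iInter]
    rw [this]
    exact isClosed_iInter fun i => isClosed_iInter fun j => isClosed_iInter fun _ =>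
      isClosed_le (continuous_apply i) (continuous_apply j)
  have h2 : IsClosed {s : Fin m → ℝ | ∀ i, s i ∈ Set.Icc p q} := by
    have : {s : Fin m → ℝ | ∀ i, s i ∈ Set.Icc p q} = Set.pi Set.univ fun _ => Set.Icc p q := by
      ext s; simp [Set.mem_pi, Pi.le_def, forall_and]
    rw [this]
    exact isClosed_set_pi fun i _ => isClosed_Icc
  exact h1.inter h2

lemma orderedSimplex_subset_pi (m : ℕ) (p q : ℝ) :
    orderedSimplex m p q ⊆ Set.pi Set.univ fun _ : Fin m => Set.Icc p q := by
  intro s hs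
  simp only [Set.mem_pi, Set.mem_univ, forall_true_left]
  exact fun i => hs.2 i

lemma orderedSimplex_isCompact (m : ℕ) (p q : ℝ) : IsCompact (orderedSimplex m p q) :=
  (isCompact_univ_pi fun _ => isCompact_Icc).of_isClosed_subset
    (orderedSimplex_isClosed m p q) (orderedSimplex_subset_pi m p q)

lemma orderedSimplex_measurableSet (m : ℕ) (p q : ℝ) :
    MeasurableSet (orderedSimplex m p q) :=
  (orderedSimplex_isClosed m p q).measurableSet


variable {A : Type} [NormedRing A] [NormedAlgebra ℂ A] [CompleteSpace A]

section Perm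
variable {m : ℕ} {p q : ℝ}

/-- coordinate-equality hyperplanes are null -/
lemma null_eq_coords (i j : Fin m) (hij : i ≠ j) :
    volume {s : Fin m → ℝ | s i = s j} = 0 := by
  set L : (Fin m → ℝ) →ₗ[ℝ] ℝ := (LinearMap.proj i : (Fin m → ℝ) →ₗ[ℝ] ℝ) - (LinearMap.proj j : (Fin m → ℝ) →ₗ[ℝ] ℝ) with hL
  have h1 : {s : Fin m → ℝ | s i = s j} = (LinearMap.ker L : Set (Fin m → ℝ)) := by
    ext s
    simp [hL, LinearMap.mem_ker, sub_eq_zero]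
  rw [h1]
  apply Measure.addHaar_submodule
  intro htop
  have : Pi.single i (1:ℝ) ∈ LinearMap.ker L := htop ▸ Submodule.mem_top
  simp [hL, LinearMap.mem_ker, Pi.single_apply, hij, (Ne.symm hij)] at this

/-- the null "diagonal" set -/
def diagSet (m : ℕ) : Set (Fin m → ℝ) := ⋃ (i : Fin m) (j : Fin m) (_ : i ≠ j), {s | s i = s j}

lemma diagSet_null : volume (diagSet m) = 0 := by
  apply measure_iUnion_null fun i => measure_iUnion_null fun j => measure_iUnion_null fun h => ?_
  exact null_eq_coords i j h

/-- permuted simplex -/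
def permSimplex (σ : Equiv.Perm (Fin m)) (p q : ℝ) : Set (Fin m → ℝ) :=
  {s | (∀ i j : Fin m, i ≤ j → s (σ i) ≤ s (σ j)) ∧ ∀ i, s i ∈ Set.Icc p q}

lemma permSimplex_preimage (σ : Equiv.Perm (Fin m)) :
    (MeasurableEquiv.piCongrLeft (fun _ : Fin m => ℝ) (σ : Fin m ≃ Fin m)) ⁻¹'
      orderedSimplex m p q = permSimplex σ.symm p q := by
  have happ : ∀ (s : Fin m → ℝ) (j : Fin m),
      (MeasurableEquiv.piCongrLeft (fun _ : Fin m => ℝ) (σ : Fin m ≃ Fin m)) s j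
        = s (σ.symm j) := by
    intro s j
    have := Equiv.piCongrLeft_apply_apply (fun _ : Fin m => ℝ) (σ : Fin m ≃ Fin m) s (σ.symm j)
    simpa [MeasurableEquiv.coe_piCongrLeft] using this
  ext s
  constructor
  · rintro ⟨h1, h2⟩
    refine ⟨fun i j hij => ?_, fun i => ?_⟩
    · have := h1 i j hij
      rwa [happ, happ] at this
    · have := h2 (σ i)
      rwa [happ, Equiv.symm_apply_apply] at this
  · rintro ⟨h1, h2⟩
    refine ⟨fun i j hij => ?_, fun i => ?_⟩
    · rw [happ, happ]; exact h1 i j hij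
    · rw [happ]; exact h2 _

lemma permSimplex_volume (τ : Equiv.Perm (Fin m)) :
    volume (permSimplex τ p q) = volume (orderedSimplex m p q) := by
  have := (volume_measurePreserving_piCongrLeft (fun _ : Fin m => ℝ)
    (τ.symm : Fin m ≃ Fin m)).measure_preimage
    (orderedSimplex_measurableSet m p q).nullMeasurableSet
  rwa [permSimplex_preimage τ.symm, Equiv.symm_symm] at this

lemma permSimplex_measurable (τ : Equiv.Perm (Fin m)) :
    MeasurableSet (permSimplex τ p q) := by
  have := (MeasurableEquiv.piCongrLeft (fun _ : Fin m => ℝ)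
    ((τ.symm : Equiv.Perm (Fin m)) : Fin m ≃ Fin m)).measurable (orderedSimplex_measurableSet m p q)
  rw [permSimplex_preimage (p := p) (q := q) τ.symm, Equiv.symm_symm] at this
  exact this

lemma strictMono_perm_eq_id (ρ : Equiv.Perm (Fin m)) (h : StrictMono ρ) : ∀ j, ρ j = j := by
  have hsymm : StrictMono (ρ.symm : Fin m → Fin m) := by
    intro a b hab
    rcases lt_trichotomy (ρ.symm a) (ρ.symm b) with h1 | h1 | h1
    · exact h1
    · exfalso; rw [← Equiv.apply_symm_apply ρ a, ← Equiv.apply_symm_apply ρ b, h1] at hab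
      exact lt_irrefl _ hab
    · exfalso
      have := h h1
      rw [Equiv.apply_symm_apply, Equiv.apply_symm_apply] at this
      exact lt_irrefl _ (hab.trans this)
  haveI : WellFoundedLT (Fin m) := inferInstance
  intro j
  have h1 : j ≤ ρ j := h.le_apply
  have h2 : j ≤ ρ.symm j := hsymm.le_apply
  have h3 : ρ j ≤ ρ (ρ.symm j) := h.monotone h2
  rw [Equiv.apply_symm_apply] at h3
  exact le_antisymm h3 h1

lemma permSimplex_aedisjoint (σ τ : Equiv.Perm (Fin m)) (hst : σ ≠ τ) :
    permSimplex σ p q ∩ permSimplex τ p q ⊆ diagSet m := by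
  intro s ⟨hs1, hs2⟩
  by_contra hmem
  have hinj : Function.Injective s := by
    intro i j hij
    by_contra hne
    exact hmem (Set.mem_iUnion.2 ⟨i, Set.mem_iUnion.2 ⟨j, Set.mem_iUnion.2 ⟨hne, hij⟩⟩⟩)
  -- both s∘σ and s∘τ are strictly monotone
  have hgm : Monotone fun i => s (σ i) := fun i j hij => hs1.1 i j hij
  have hhm : Monotone fun i => s (τ i) := fun i j hij => hs2.1 i j hij
  have hg : StrictMono fun i => s (σ i) := hgm.strictMono_of_injective (hinj.comp σ.injective)
  have hh : StrictMono fun i => s (τ i) := hhm.strictMono_of_injective (hinj.comp τ.injective)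
  set ρ : Equiv.Perm (Fin m) := τ.trans σ.symm with hρ
  have hρmono : StrictMono (ρ : Fin m → Fin m) := by
    intro i j hij
    have h1 : s (τ i) < s (τ j) := hh hij
    have : s (σ (ρ i)) < s (σ (ρ j)) := by
      simpa [hρ, Equiv.trans_apply, Equiv.apply_symm_apply] using h1
    exact hg.lt_iff_lt.mp this
  have : ∀ j, ρ j = j := strictMono_perm_eq_id ρ hρmono
  apply hst
  ext i
  have := this i
  simp only [hρ, Equiv.trans_apply] at this
  have := congrArg σ this
  rw [Equiv.apply_symm_apply] at this
  exact this.symm ▸ rfl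

lemma simplex_volume_le (hpq : p ≤ q) :
    (m.factorial : ℝ≥0∞) * volume (orderedSimplex m p q) ≤ ENNReal.ofReal (q - p) ^ m := by
  have hdisj : (↑(Finset.univ : Finset (Equiv.Perm (Fin m))) : Set (Equiv.Perm (Fin m))).Pairwise
      (Function.onFun (AEDisjoint volume) fun σ => permSimplex σ p q) := by
    intro σ _ τ _ hst
    exact measure_mono_null (permSimplex_aedisjoint σ τ hst) diagSet_null
  have hsum : ∑ σ : Equiv.Perm (Fin m), volume (permSimplex σ p q)
      = volume (⋃ σ ∈ (Finset.univ : Finset (Equiv.Perm (Fin m))), permSimplex σ p q) := by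
    rw [measure_biUnion_finset₀ hdisj fun σ _ => (permSimplex_measurable σ).nullMeasurableSet]
  have hsub : (⋃ σ ∈ (Finset.univ : Finset (Equiv.Perm (Fin m))), permSimplex σ p q)
      ⊆ Set.pi Set.univ fun _ : Fin m => Set.Icc p q := by
    intro s hs
    simp only [Set.mem_iUnion] at hs
    obtain ⟨σ, _, hs⟩ := hs
    intro i _
    exact hs.2 i
  calc (m.factorial : ℝ≥0∞) * volume (orderedSimplex m p q)
      = ∑ σ : Equiv.Perm (Fin m), volume (permSimplex σ p q) := by
        simp only [permSimplex_volume, Finset.sum_const, Finset.card_univ, Fintype.card_perm,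
          Fintype.card_fin, nsmul_eq_mul]
    _ ≤ volume (Set.pi Set.univ fun _ : Fin m => Set.Icc p q) := hsum ▸ measure_mono hsub
    _ = ENNReal.ofReal (q - p) ^ m := by
        rw [volume_pi_pi]
        simp [Real.volume_Icc]

lemma simplex_volume_finite : volume (orderedSimplex m p q) < ⊤ :=
  (orderedSimplex_isCompact m p q).measure_lt_top

lemma simplex_volume_toReal_le (hpq : p ≤ q) :
    (volume (orderedSimplex m p q)).toReal ≤ (q - p) ^ m / m.factorial := by
  have h := simplex_volume_le (m := m) hpq
  have hfin := simplex_volume_finite (m := m) (p := p) (q := q)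
  have h2 : (m.factorial : ℝ) * (volume (orderedSimplex m p q)).toReal ≤ (q - p) ^ m := by
    have := ENNReal.toReal_mono (by
      rw [← ENNReal.ofReal_pow (by linarith)]
      exact ENNReal.ofReal_ne_top) h
    rw [ENNReal.toReal_mul, ENNReal.toReal_natCast, ← ENNReal.ofReal_pow (by linarith),
      ENNReal.toReal_ofReal (pow_nonneg (by linarith) m)] at this
    exact this
  rw [le_div_iff₀ (by positivity : (0:ℝ) < m.factorial)]
  linarith

end Perm

lemma prodFn_continuous {β : ℝ → A} (hβ : Continuous β) (m : ℕ) :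
    Continuous fun s : Fin m → ℝ => (List.ofFn fun i => β (s i)).prod := by
  have : ∀ s : Fin m → ℝ, (List.ofFn fun i => β (s i)).prod
      = ((List.finRange m).map fun i => β (s i)).prod := by
    intro s; rw [List.ofFn_eq_map]
  simp only [this]
  exact continuous_list_prod _ fun i _ => hβ.comp (continuous_apply i)

lemma prodFn_norm_le {β : ℝ → A} {M : ℝ} (p q : ℝ) (hM : ∀ t ∈ Set.Icc p q, ‖β t‖ ≤ M)
    (hM0 : 0 ≤ M) (m : ℕ) (hm : m ≠ 0) :
    ∀ s ∈ orderedSimplex m p q, ‖(List.ofFn fun i => β (s i)).prod‖ ≤ M ^ m := by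
  intro s hs
  have hne : (List.ofFn fun i => β (s i)) ≠ [] := by
    simp [List.ofFn_eq_nil_iff, hm]
  calc ‖(List.ofFn fun i => β (s i)).prod‖
      ≤ ((List.ofFn fun i => β (s i)).map norm).prod := List.norm_prod_le' hne
    _ ≤ M ^ m := by
        rw [List.map_ofFn]
        have : ∀ l : List ℝ, (∀ x ∈ l, x ≤ M) → (∀ x ∈ l, 0 ≤ x) → l.prod ≤ M ^ l.length := by
          intro l
          induction l with
          | nil => simp
          | cons a l ih =>
            intro h1 h2
            simp only [List.prod_cons, List.length_cons, pow_succ']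
            have hla : a ≤ M := h1 a (by simp)
            have h0a : 0 ≤ a := h2 a (by simp)
            have := ih (fun x hx => h1 x (by simp [hx])) (fun x hx => h2 x (by simp [hx]))
            calc a * l.prod ≤ M * l.prod := by
                  apply mul_le_mul_of_nonneg_right hla
                  exact List.prod_nonneg fun x hx => h2 x (by simp [hx])
              _ ≤ M * M ^ l.length := by
                  apply mul_le_mul_of_nonneg_left this hM0
        have h := this (List.ofFn fun i => norm ((fun i => β (s i)) i)) ?_ ?_
        · simpa [Function.comp_def] using h
        · intro x hx
          rw [List.mem_ofFn] at hx
          obtain ⟨i, rfl⟩ := hx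
          exact hM _ (hs.2 i)
        · intro x hx
          rw [List.mem_ofFn] at hx
          obtain ⟨i, rfl⟩ := hx
          exact norm_nonneg _

lemma dysonIntegrable {β : ℝ → A} (hβ : Continuous β) (m : ℕ) (p q : ℝ) :
    IntegrableOn (fun s : Fin m → ℝ => (List.ofFn fun i => β (s i)).prod)
      (orderedSimplex m p q) := by
  exact ((prodFn_continuous hβ m).continuousOn).integrableOn_compact
    (orderedSimplex_isCompact m p q)

lemma dysonTerm_zero (β : ℝ → A) (p q : ℝ) : dysonTerm β 0 p q = 1 := by
  have h1 : orderedSimplex 0 p q = Set.univ := by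
    ext s
    refine ⟨fun _ => trivial, fun _ => ⟨fun i => i.elim0, fun i => i.elim0⟩⟩
  rw [dysonTerm, h1]
  have h2 : ∀ s : Fin 0 → ℝ, (List.ofFn fun i : Fin 0 => β (s i)).prod = 1 := by
    intro s; simp
  simp only [h2]
  rw [setIntegral_const]
  have : volume (Set.univ : Set (Fin 0 → ℝ)) = 1 := by
    rw [MeasureTheory.volume_pi, Measure.pi_univ]; simp
  rw [Measure.real, this]
  simp

lemma dysonTerm_norm_le {β : ℝ → A} (hβ : Continuous β) {M : ℝ} {p q : ℝ} (hpq : p ≤ q)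
    (hM : ∀ t, ‖β t‖ ≤ M) (hM0 : 0 ≤ M) (m : ℕ) (hm : m ≠ 0) :
    ‖dysonTerm β m p q‖ ≤ (M * (q - p)) ^ m / m.factorial := by
  have hb := prodFn_norm_le (β := β) p q (fun t _ => hM t) hM0 m hm
  calc ‖dysonTerm β m p q‖
      ≤ M ^ m * (volume (orderedSimplex m p q)).toReal :=
        norm_setIntegral_le_of_norm_le_const simplex_volume_finite hb
    _ ≤ M ^ m * ((q - p) ^ m / m.factorial) := by
        apply mul_le_mul_of_nonneg_left (simplex_volume_toReal_le hpq) (pow_nonneg hM0 m)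
    _ = (M * (q - p)) ^ m / m.factorial := by rw [mul_pow]; ring

lemma dysonTerm_norm_summable {β : ℝ → A} (hβ : Continuous β) {M : ℝ} {p q : ℝ} (hpq : p ≤ q)
    (hM : ∀ t, ‖β t‖ ≤ M) (hM0 : 0 ≤ M) :
    Summable fun m => ‖dysonTerm β (m + 1) p q‖ := by
  apply Summable.of_nonneg_of_le (fun m => norm_nonneg _)
    (fun m => dysonTerm_norm_le hβ hpq hM hM0 (m + 1) m.succ_ne_zero)
  exact (summable_nat_add_iff 1).2 (Real.summable_pow_div_factorial (M * (q - p)))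

lemma dysonTerm_summable {β : ℝ → A} (hβ : Continuous β) {M : ℝ} {p q : ℝ} (hpq : p ≤ q)
    (hM : ∀ t, ‖β t‖ ≤ M) (hM0 : 0 ≤ M) :
    Summable fun m => dysonTerm β m p q :=
  (summable_nat_add_iff 1).1 ((dysonTerm_norm_summable hβ hpq hM hM0).of_norm)

lemma dysonExp_eq_tsum {β : ℝ → A} (hβ : Continuous β) {M : ℝ} {p q : ℝ} (hpq : p ≤ q)
    (hM : ∀ t, ‖β t‖ ≤ M) (hM0 : 0 ≤ M) :
    dysonExp β p q = ∑' m : ℕ, dysonTerm β m p q := by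
  rw [dysonExp, Summable.tsum_eq_zero_add (dysonTerm_summable hβ hpq hM hM0), dysonTerm_zero]

/-- The part of the simplex where the first `k` coordinates are `≤ b` and the rest `≥ b`. -/
def cutSet (b : ℝ) (n k : ℕ) (p q : ℝ) : Set (Fin n → ℝ) :=
  orderedSimplex n p q ∩ {s | ∀ i : Fin n, ((i : ℕ) < k → s i ≤ b) ∧ (k ≤ (i : ℕ) → b ≤ s i)}

/-- Strict version. -/
def cutSetS (b : ℝ) (n k : ℕ) (p q : ℝ) : Set (Fin n → ℝ) :=
  orderedSimplex n p q ∩ {s | ∀ i : Fin n, ((i : ℕ) < k → s i ≤ b) ∧ (k ≤ (i : ℕ) → b < s i)}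

lemma cutSetS_measurable (b : ℝ) (n k : ℕ) (p q : ℝ) : MeasurableSet (cutSetS b n k p q) := by
  apply (orderedSimplex_measurableSet n p q).inter
  have : {s : Fin n → ℝ | ∀ i : Fin n, ((i : ℕ) < k → s i ≤ b) ∧ (k ≤ (i : ℕ) → b < s i)}
      = ⋂ i : Fin n, ({s : Fin n → ℝ | (i : ℕ) < k → s i ≤ b}
          ∩ {s : Fin n → ℝ | k ≤ (i : ℕ) → b < s i}) := by
    ext s; simp [Set.mem_iInter, forall_and]
  rw [this]
  refine MeasurableSet.iInter fun i => MeasurableSet.inter ?_ ?_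
  · by_cases h : (i : ℕ) < k
    · simp only [h, forall_true_left]
      exact measurableSet_le (measurable_pi_apply i) measurable_const
    · simp only [h, false_implies]
      exact MeasurableSet.univ.congr (by ext s; simp [h])
  · by_cases h : k ≤ (i : ℕ)
    · simp only [h, forall_true_left]
      exact measurableSet_lt measurable_const (measurable_pi_apply i)
    · exact MeasurableSet.univ.congr (by ext s; simp [h])

lemma cutSet_cover {b : ℝ} {n : ℕ} {a c : ℝ} :
    orderedSimplex n a c = ⋃ k ∈ Finset.range (n + 1), cutSetS b n k a c := by
  ext s
  simp only [Set.mem_iUnion, Finset.mem_range]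
  constructor
  · intro hs
    set k := (Finset.univ.filter fun i : Fin n => s i ≤ b).card with hk
    refine ⟨k, ?_, hs, fun i => ⟨?_, ?_⟩⟩
    · have := Finset.card_filter_le Finset.univ fun i : Fin n => s i ≤ b
      simp only [Finset.card_univ, Fintype.card_fin] at this
      omega
    · intro hik
      by_contra hb
      push_neg at hb
      have hsub : (Finset.univ.filter fun j : Fin n => s j ≤ b) ⊆ Finset.Iio i := by
        intro j hj
        simp only [Finset.mem_filter] at hj
        simp only [Finset.mem_Iio]
        by_contra hji
        push_neg at hji
        exact absurd (le_trans (hs.1 i j hji) hj.2) (not_le.2 hb)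
      have := Finset.card_le_card hsub
      rw [Fin.card_Iio] at this
      omega
    · intro hik
      by_contra hb
      push_neg at hb
      have hsub : Finset.Iic i ⊆ (Finset.univ.filter fun j : Fin n => s j ≤ b) := by
        intro j hj
        simp only [Finset.mem_Iic] at hj
        simp only [Finset.mem_filter, Finset.mem_univ, true_and]
        exact le_trans (hs.1 j i hj) hb
      have := Finset.card_le_card hsub
      rw [Fin.card_Iic] at this
      omega
  · rintro ⟨k, _, hs, _⟩
    exact hs

lemma cutSetS_disjoint {b : ℝ} {n : ℕ} {a c : ℝ} {k k' : ℕ} (h : k < k') (hk' : k' ≤ n) :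
    Disjoint (cutSetS b n k a c) (cutSetS b n k' a c) := by
  rw [Set.disjoint_left]
  rintro s ⟨_, h1⟩ ⟨_, h2⟩
  have hkn : k < n := lt_of_lt_of_le h hk'
  set i : Fin n := ⟨k, hkn⟩ with hi
  have hb1 : b < s i := (h1 i).2 (by simp [hi])
  have hb2 : s i ≤ b := (h2 i).1 (by simp [hi, h])
  exact absurd (lt_of_lt_of_le hb1 hb2) (lt_irrefl b)

lemma cutSetS_ae_eq {b : ℝ} {n k : ℕ} {a c : ℝ} :
    cutSetS b n k a c =ᵐ[volume] cutSet b n k a c := by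
  rw [Filter.eventuallyEq_set]
  have hnull : volume (⋃ i : Fin n, {s : Fin n → ℝ | s i = b}) = 0 := by
    apply measure_iUnion_null fun i => ?_
    have : {s : Fin n → ℝ | s i = b} = {f : Fin n → ℝ | f i = b} := rfl
    rw [this, MeasureTheory.volume_pi]
    exact Measure.pi_hyperplane (fun _ => (volume : Measure ℝ)) i b
  have hsub1 : cutSetS b n k a c ⊆ cutSet b n k a c := by
    rintro s ⟨hs1, hs2⟩
    exact ⟨hs1, fun i => ⟨(hs2 i).1, fun h => le_of_lt ((hs2 i).2 h)⟩⟩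
  have hsub2 : cutSet b n k a c \ cutSetS b n k a c ⊆ ⋃ i : Fin n, {s : Fin n → ℝ | s i = b} := by
    rintro s ⟨⟨hs1, hs2⟩, hns⟩
    simp only [cutSetS, Set.mem_inter_iff, Set.mem_setOf_eq, not_and, not_forall] at hns
    obtain ⟨i, hi⟩ := hns hs1
    obtain ⟨hki, hnb⟩ := hi fun h => (hs2 i).1 h
    have hble : b ≤ s i := (hs2 i).2 hki
    push_neg at hnb
    exact Set.mem_iUnion.2 ⟨i, le_antisymm hnb hble⟩
  filter_upwards [measure_eq_zero_iff_ae_notMem.1 hnull] with s hs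
  constructor
  · intro h; exact hsub1 h
  · intro h
    by_contra hn
    exact hs (hsub2 ⟨h, hn⟩)

lemma dysonTerm_cut_sum {β : ℝ → A} (hβ : Continuous β) {a b c : ℝ} (n : ℕ) :
    dysonTerm β n a c
      = ∑ k ∈ Finset.range (n + 1),
          ∫ s in cutSet b n k a c, (List.ofFn fun i => β (s i)).prod := by
  rw [dysonTerm, cutSet_cover (b := b)]
  rw [integral_biUnion_finset _ (fun k _ => cutSetS_measurable b n k a c) ?_ ?_]
  · exact Finset.sum_congr rfl fun k _ => setIntegral_congr_set cutSetS_ae_eq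
  · intro k hk k' hk' hne
    simp only [Finset.coe_range, Set.mem_Iio, Finset.mem_coe, Finset.mem_range] at hk hk'
    rcases lt_or_gt_of_ne hne with h | h
    · exact cutSetS_disjoint h (by omega)
    · exact (cutSetS_disjoint h (by omega)).symm
  · intro k _
    exact (dysonIntegrable hβ n a c).mono_set Set.inter_subset_left

noncomputable def glueEquiv (k l : ℕ) : ((Fin k → ℝ) × (Fin l → ℝ)) ≃ᵐ (Fin (k + l) → ℝ) :=
  (MeasurableEquiv.sumPiEquivProdPi (fun _ : Fin k ⊕ Fin l => ℝ)).symm.trans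
    (MeasurableEquiv.piCongrLeft (fun _ => ℝ) finSumFinEquiv)

lemma glueEquiv_measurePreserving (k l : ℕ) :
    MeasurePreserving (glueEquiv k l) volume volume :=
  ((volume_measurePreserving_piCongrLeft (fun _ : Fin (k + l) => ℝ) finSumFinEquiv).comp
    (volume_measurePreserving_sumPiEquivProdPi_symm (fun _ : Fin k ⊕ Fin l => ℝ)) : _)

lemma glueEquiv_left {k l : ℕ} (u : Fin k → ℝ) (v : Fin l → ℝ) (i : Fin k) :
    glueEquiv k l (u, v) (Fin.castAdd l i) = u i := by
  simp only [glueEquiv, MeasurableEquiv.trans_apply, MeasurableEquiv.coe_piCongrLeft,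
    ← finSumFinEquiv_apply_left i, Equiv.piCongrLeft_apply_apply]
  simp [MeasurableEquiv.sumPiEquivProdPi, Equiv.sumPiEquivProdPi]

lemma glueEquiv_right {k l : ℕ} (u : Fin k → ℝ) (v : Fin l → ℝ) (i : Fin l) :
    glueEquiv k l (u, v) (Fin.natAdd k i) = v i := by
  simp only [glueEquiv, MeasurableEquiv.trans_apply, MeasurableEquiv.coe_piCongrLeft,
    ← finSumFinEquiv_apply_right i, Equiv.piCongrLeft_apply_apply]
  simp [MeasurableEquiv.sumPiEquivProdPi, Equiv.sumPiEquivProdPi]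

lemma glueEquiv_preimage {k l : ℕ} {a b c : ℝ} (hab : a ≤ b) (hbc : b ≤ c) :
    glueEquiv k l ⁻¹' cutSet b (k + l) k a c
      = orderedSimplex k a b ×ˢ orderedSimplex l b c := by
  ext ⟨u, v⟩
  simp only [Set.mem_preimage, Set.mem_prod]
  constructor
  · rintro ⟨⟨hmono, hIcc⟩, hcut⟩
    refine ⟨⟨fun i j hij => ?_, fun i => ?_⟩, ⟨fun i j hij => ?_, fun i => ?_⟩⟩
    · have := hmono (Fin.castAdd l i) (Fin.castAdd l j) (by rw [Fin.le_def] at hij ⊢; simpa using hij)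
      rwa [glueEquiv_left, glueEquiv_left] at this
    · have h1 := hIcc (Fin.castAdd l i)
      have h2 := (hcut (Fin.castAdd l i)).1 (by simpa using i.isLt)
      rw [glueEquiv_left] at h1 h2
      exact ⟨h1.1, h2⟩
    · have hij' := Fin.le_def.1 hij
      have := hmono (Fin.natAdd k i) (Fin.natAdd k j) (by rw [Fin.le_def]; simpa using hij')
      rwa [glueEquiv_right, glueEquiv_right] at this
    · have h1 := hIcc (Fin.natAdd k i)
      have h2 := (hcut (Fin.natAdd k i)).2 (by simp)
      rw [glueEquiv_right] at h1 h2
      exact ⟨h2, h1.2⟩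
  · rintro ⟨⟨hu1, hu2⟩, ⟨hv1, hv2⟩⟩
    refine ⟨⟨fun i j hij => ?_, fun i => ?_⟩, fun i => ⟨fun hik => ?_, fun hik => ?_⟩⟩
    · induction i using Fin.addCases with
      | left x =>
        induction j using Fin.addCases with
        | left y =>
          rw [glueEquiv_left, glueEquiv_left]
          exact hu1 x y (by rw [Fin.le_def] at hij ⊢; simpa using hij)
        | right y =>
          rw [glueEquiv_left, glueEquiv_right]
          exact le_trans (hu2 x).2 (hv2 y).1
      | right x =>
        induction j using Fin.addCases with
        | left y =>
          exfalso
          have hx : (Fin.natAdd k x : ℕ) = k + (x : ℕ) := rfl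
          have hy : (Fin.castAdd l y : ℕ) = (y : ℕ) := rfl
          have := Fin.le_def.1 hij
          rw [hx, hy] at this
          have := y.isLt
          omega
        | right y =>
          rw [glueEquiv_right, glueEquiv_right]
          have hij' := Fin.le_def.1 hij
          simp only [Fin.coe_natAdd] at hij'
          exact hv1 x y (by rw [Fin.le_def]; omega)
    · induction i using Fin.addCases with
      | left x =>
        rw [glueEquiv_left]
        exact ⟨(hu2 x).1, le_trans (hu2 x).2 hbc⟩
      | right x =>
        rw [glueEquiv_right]
        exact ⟨le_trans hab (hv2 x).1, (hv2 x).2⟩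
    · induction i using Fin.addCases with
      | left x =>
        rw [glueEquiv_left]
        exact (hu2 x).2
      | right x =>
        exfalso
        have hx : (Fin.natAdd k x : ℕ) = k + (x : ℕ) := rfl
        rw [hx] at hik
        omega
    · induction i using Fin.addCases with
      | left x =>
        exfalso
        have hx : (Fin.castAdd l x : ℕ) = (x : ℕ) := rfl
        rw [hx] at hik
        have := x.isLt
        omega
      | right x =>
        rw [glueEquiv_right]
        exact (hv2 x).1

lemma integrand_glue {β : ℝ → A} {k l : ℕ} (u : Fin k → ℝ) (v : Fin l → ℝ) :
    (List.ofFn fun i : Fin (k + l) => β (glueEquiv k l (u, v) i)).prod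
      = (List.ofFn fun i => β (u i)).prod * (List.ofFn fun i => β (v i)).prod := by
  have hl : ∀ i : Fin k, glueEquiv k l (u, v) (Fin.castLE (Nat.le_add_right k l) i) = u i :=
    glueEquiv_left u v
  simp only [List.ofFn_add, List.prod_append, glueEquiv_left, glueEquiv_right, hl]

lemma cut_integral_eq {β : ℝ → A} (hβ : Continuous β) {a b c : ℝ} (hab : a ≤ b) (hbc : b ≤ c)
    (k l : ℕ) :
    (∫ s in cutSet b (k + l) k a c, (List.ofFn fun i => β (s i)).prod)
      = dysonTerm β k a b * dysonTerm β l b c := by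
  have he := glueEquiv_measurePreserving k l
  have h1 := he.setIntegral_preimage_emb (glueEquiv k l).measurableEmbedding
    (fun s : Fin (k + l) → ℝ => (List.ofFn fun i => β (s i)).prod) (cutSet b (k + l) k a c)
  rw [← h1, glueEquiv_preimage hab hbc]
  have h2 : ∀ z : (Fin k → ℝ) × (Fin l → ℝ),
      (List.ofFn fun i : Fin (k + l) => β (glueEquiv k l z i)).prod
        = (List.ofFn fun i => β (z.1 i)).prod * (List.ofFn fun i => β (z.2 i)).prod := by
    rintro ⟨u, v⟩; exact integrand_glue u v
  simp only [h2]
  have hint : IntegrableOn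
      (fun z : (Fin k → ℝ) × (Fin l → ℝ) =>
        (List.ofFn fun i => β (z.1 i)).prod * (List.ofFn fun i => β (z.2 i)).prod)
      (orderedSimplex k a b ×ˢ orderedSimplex l b c) volume := by
    apply ContinuousOn.integrableOn_compact
      ((orderedSimplex_isCompact k a b).prod (orderedSimplex_isCompact l b c))
    exact (((prodFn_continuous hβ k).comp continuous_fst).mul
      ((prodFn_continuous hβ l).comp continuous_snd)).continuousOn
  rw [Measure.volume_eq_prod] at hint ⊢
  rw [setIntegral_prod _ hint]
  have h3 : ∀ u : Fin k → ℝ,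
      (∫ v in orderedSimplex l b c,
        (List.ofFn fun i => β (u i)).prod * (List.ofFn fun i => β (v i)).prod)
        = (List.ofFn fun i => β (u i)).prod * dysonTerm β l b c := by
    intro u
    have := (ContinuousLinearMap.mul ℝ A ((List.ofFn fun i => β (u i)).prod)).integral_comp_comm
      (dysonIntegrable hβ l b c)
    simpa [dysonTerm] using this
  simp only [h3]
  have := ((ContinuousLinearMap.mul ℝ A).flip (dysonTerm β l b c)).integral_comp_comm
    (dysonIntegrable hβ k a b)
  simpa [dysonTerm] using this

lemma dysonTerm_split {β : ℝ → A} (hβ : Continuous β) {a b c : ℝ} (hab : a ≤ b) (hbc : b ≤ c)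
    {n k l : ℕ} (h : n = k + l) :
    (∫ s in cutSet b n k a c, (List.ofFn fun i => β (s i)).prod)
      = dysonTerm β k a b * dysonTerm β l b c := by
  subst h
  exact cut_integral_eq hβ hab hbc k l

lemma dysonTerm_concat {β : ℝ → A} (hβ : Continuous β) {a b c : ℝ} (hab : a ≤ b) (hbc : b ≤ c)
    (n : ℕ) :
    dysonTerm β n a c
      = ∑ kl ∈ Finset.HasAntidiagonal.antidiagonal n, dysonTerm β kl.1 a b * dysonTerm β kl.2 b c := by
  rw [dysonTerm_cut_sum hβ (b := b) n, Finset.Nat.sum_antidiagonal_eq_sum_range_succ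
    (f := fun k l => dysonTerm β k a b * dysonTerm β l b c)]
  refine Finset.sum_congr rfl fun k hk => ?_
  rw [Finset.mem_range] at hk
  exact dysonTerm_split hβ hab hbc (by omega)

lemma dysonTerm_congr {β α : ℝ → A} {a c : ℝ} (h : ∀ t ∈ Set.Icc a c, β t = α t)
    {p q : ℝ} (hp : a ≤ p) (hq : q ≤ c) (m : ℕ) :
    dysonTerm α m p q = dysonTerm β m p q := by
  refine setIntegral_congr_fun (orderedSimplex_measurableSet m p q) fun s hs => ?_
  have hfg : (fun i => α (s i)) = fun i => β (s i) := by
    funext i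
    have hmem : s i ∈ Set.Icc a c := ⟨le_trans hp (hs.2 i).1, le_trans (hs.2 i).2 hq⟩
    exact (h _ hmem).symm
  simp only [hfg]

lemma dysonExp_congr {β α : ℝ → A} {a c : ℝ} (h : ∀ t ∈ Set.Icc a c, β t = α t)
    {p q : ℝ} (hp : a ≤ p) (hq : q ≤ c) :
    dysonExp α p q = dysonExp β p q := by
  unfold dysonExp
  congr 1
  exact tsum_congr fun m => dysonTerm_congr h hp hq (m + 1)

/-- **Concatenation of time-ordered exponentials.**  Let `A` be a complex unital Banach
algebra, `a ≤ b ≤ c`, and `α : [a,c] → A` continuous.  Then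
`Te^{∫_a^c α} = Te^{∫_a^b α} · Te^{∫_b^c α}`. -/
theorem dyson_exp_concatenation
    {A : Type} [NormedRing A] [NormedAlgebra ℂ A] [CompleteSpace A]
    (a b c : ℝ) (hab : a ≤ b) (hbc : b ≤ c)
    (α : ℝ → A) (hα : ContinuousOn α (Set.Icc a c)) :
    dysonExp α a c = dysonExp α a b * dysonExp α b c := by
  have hac : a ≤ c := le_trans hab hbc
  -- extend `α` to a globally continuous bounded function `β` by clamping
  set β : ℝ → A := fun t => α (max a (min c t)) with hβdef
  have hclamp : Continuous fun t : ℝ => max a (min c t) :=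
    continuous_const.max (continuous_const.min continuous_id)
  have hmaps : ∀ t : ℝ, max a (min c t) ∈ Set.Icc a c := by
    intro t
    exact ⟨le_max_left _ _, max_le hac (min_le_left _ _)⟩
  have hβ : Continuous β := hα.comp_continuous hclamp hmaps
  have hβα : ∀ t ∈ Set.Icc a c, β t = α t := by
    intro t ht
    have h1 : min c t = t := min_eq_right ht.2
    have h2 : max a t = t := max_eq_right ht.1
    simp [hβdef, h1, h2]
  obtain ⟨C, hC⟩ := (isCompact_Icc (a := a) (b := c)).exists_bound_of_continuousOn hα
  set M : ℝ := max C 0 with hMdef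
  have hM0 : 0 ≤ M := le_max_right _ _
  have hM : ∀ t, ‖β t‖ ≤ M := fun t =>
    le_trans (hC _ (hmaps t)) (le_max_left _ _)
  -- replace `α` by `β`
  rw [dysonExp_congr hβα le_rfl le_rfl, dysonExp_congr hβα le_rfl hbc,
    dysonExp_congr hβα hab le_rfl]
  -- now use the Cauchy product
  rw [dysonExp_eq_tsum hβ hac hM hM0, dysonExp_eq_tsum hβ hab hM hM0,
    dysonExp_eq_tsum hβ hbc hM hM0]
  have hsum1 : Summable fun m => ‖dysonTerm β m a b‖ :=
    (summable_nat_add_iff 1).1 (dysonTerm_norm_summable hβ hab hM hM0)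
  have hsum2 : Summable fun m => ‖dysonTerm β m b c‖ :=
    (summable_nat_add_iff 1).1 (dysonTerm_norm_summable hβ hbc hM hM0)
  rw [tsum_mul_tsum_eq_tsum_sum_antidiagonal_of_summable_norm hsum1 hsum2]
  exact tsum_congr fun n => dysonTerm_concat hβ hab hbc n

end
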